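/- arXiv:2009.09293 — 2 statements merged into one kernel-verified Lean document; each statement's English description precedes it below -/
import Mathlib

section
/- For every t with 0 < t < 1 and every real C with 0 < C < 1, the sum ∑_{n=1}^∞ n^{−2−C}·min{t²n², 1} is bounded above by a constant (depending only on C) times t^{1+C}. -/
/-!
Split the sum at `N = ⌊1/t⌋`, where `t * n` crosses `1`. For `n ≤ N` the minimum is `t²n²`, and
`t² ∑_{n ≤ N} n^{-c} ≲ t² N^{1-c} ≲ t^{1+c}`; for `n > N` it is at most `1`, and
`∑_{n > N} n^{-2-c} ≲ N^{-1-c} ≲ t^{1+c}`. Both partial sums are compared with integrals of the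
antitone functions `x ↦ x^{-c}` and `x ↦ x^{-2-c}`.
-/

open Real Set

lemma rpow_mul_min_sq_le_sq_mul_rpow (s t : ℝ) {x : ℝ} (hx : 0 ≤ x) :
    x ^ s * min (t ^ 2 * x ^ 2) 1 ≤ t ^ 2 * x ^ (s + 2) := by
  rcases hx.eq_or_lt with rfl | hx
  · simp only [zero_pow two_ne_zero, mul_zero, min_eq_left zero_le_one]
    positivity
  calc x ^ s * min (t ^ 2 * x ^ 2) 1 ≤ x ^ s * (t ^ 2 * x ^ 2) := by gcongr; exact min_le_left _ _
    _ = t ^ 2 * x ^ (s + 2) := by rw [rpow_add hx, rpow_two]; ring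

lemma rpow_mul_min_le_rpow (s t : ℝ) {x : ℝ} (hx : 0 ≤ x) :
    x ^ s * min (t ^ 2 * x ^ 2) 1 ≤ x ^ s :=
  mul_le_of_le_one_right (rpow_nonneg hx s) (min_le_right _ _)

lemma rpow_add_mul_rpow_le {t x : ℝ} (a : ℝ) {b : ℝ} (ht : 0 < t) (hx : 0 ≤ x) (hb : 0 ≤ b)
    (htx : t * x ≤ 1) : t ^ (a + b) * x ^ b ≤ t ^ a := by
  calc t ^ (a + b) * x ^ b = t ^ a * (t * x) ^ b := by
        rw [rpow_add ht, mul_rpow ht.le hx]; ring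
    _ ≤ t ^ a := mul_le_of_le_one_right (rpow_nonneg ht.le a)
        (rpow_le_one (by positivity) htx hb)

lemma rpow_neg_le_of_one_le_mul {t x b : ℝ} (hx : 0 < x) (hb : 0 ≤ b)
    (htx : 1 ≤ t * x) : x ^ (-b) ≤ t ^ b := by
  rw [rpow_neg hx.le, ← inv_rpow hx.le]
  exact rpow_le_rpow (by positivity) ((inv_le_iff_one_le_mul₀ hx).2 (by linarith)) hb

lemma mul_floor_inv_le_one {t : ℝ} (ht : 0 ≤ t) : t * ⌊t⁻¹⌋₊ ≤ 1 :=
  (mul_le_mul_of_nonneg_left (Nat.floor_le (inv_nonneg.2 ht)) ht).trans mul_inv_le_one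

lemma one_le_two_mul_mul_floor_inv {t : ℝ} (ht0 : 0 < t) (ht1 : t ≤ 1) :
    1 ≤ 2 * t * ⌊t⁻¹⌋₊ := by
  have hN : (1 : ℝ) ≤ ⌊t⁻¹⌋₊ := by exact_mod_cast Nat.floor_pos.2 (one_le_inv₀ ht0 |>.2 ht1)
  have h := (inv_lt_iff_one_lt_mul₀' ht0).1 (Nat.lt_floor_add_one t⁻¹)
  nlinarith

lemma sum_range_natCast_succ_rpow_le {s : ℝ} (hs : -1 < s) (hs0 : s ≤ 0) (N : ℕ) :
    ∑ i ∈ Finset.range N, ((i + 1 : ℕ) : ℝ) ^ s ≤ (N : ℝ) ^ (s + 1) / (s + 1) := by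
  have hs1 : 0 < s + 1 := by linarith
  obtain _ | M := N
  · simp [zero_rpow hs1.ne']
  -- The term `1 ^ s` is split off: for `s < 0`, `0 ^ s = 0`, so `x ↦ x ^ s` is not antitone
  -- on `[0, 1]`.
  have hanti : AntitoneOn (fun x : ℝ ↦ x ^ s) (Icc 1 (1 + M)) := fun x hx y _ hxy ↦
    rpow_le_rpow_of_nonpos (by linarith [hx.1]) hxy hs0
  calc ∑ i ∈ Finset.range (M + 1), ((i + 1 : ℕ) : ℝ) ^ s
      = 1 + ∑ i ∈ Finset.range M, (1 + ((i + 1 : ℕ) : ℝ)) ^ s := by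
        rw [Finset.sum_range_succ', add_comm]; push_cast; simp [add_comm]
    _ ≤ 1 + ∫ x in (1 : ℝ)..1 + M, x ^ s := by gcongr; exact hanti.sum_le_integral
    _ = 1 + ((1 + M : ℝ) ^ (s + 1) - 1) / (s + 1) := by
        rw [integral_rpow (Or.inl hs), one_rpow]
    _ ≤ ((M + 1 : ℕ) : ℝ) ^ (s + 1) / (s + 1) := by
        have : 1 ≤ 1 / (s + 1) := by rw [le_div_iff₀ hs1]; linarith
        push_cast
        rw [add_comm (M : ℝ), sub_div]
        linarith

lemma tsum_natCast_add_succ_rpow_le {s : ℝ} (hs : s < -1) {N : ℕ} (hN : 0 < N) :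
    ∑' i : ℕ, ((i + N + 1 : ℕ) : ℝ) ^ s ≤ (N : ℝ) ^ (s + 1) / (-s - 1) := by
  have hN' : (0 : ℝ) < N := by exact_mod_cast hN
  have hanti : AntitoneOn (fun x : ℝ ↦ x ^ s) (Ici (N : ℝ)) := fun x hx y _ hxy ↦
    rpow_le_rpow_of_nonpos (hN'.trans_le hx) hxy (by linarith)
  calc ∑' i : ℕ, ((i + N + 1 : ℕ) : ℝ) ^ s ≤ ∫ x in Ioi (N : ℝ), x ^ s :=
        hanti.tsum_comp_add_le_integral N (integrableOn_Ioi_rpow_of_lt hs hN')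
          fun x hx ↦ rpow_nonneg (hN'.trans hx).le s
    _ = (N : ℝ) ^ (s + 1) / (-s - 1) := by
        rw [integral_Ioi_rpow_of_lt hs hN', neg_div, ← div_neg, neg_add']

lemma summable_rpow_mul_min {c : ℝ} (hc : -1 < c) (t : ℝ) :
    Summable fun n : ℕ ↦ (n : ℝ) ^ (-2 - c) * min (t ^ 2 * (n : ℝ) ^ 2) 1 :=
  (summable_nat_rpow.2 (by linarith)).of_nonneg_of_le
    (fun n ↦ mul_nonneg (by positivity) (le_min (by positivity) zero_le_one))
    fun n ↦ rpow_mul_min_le_rpow _ _ n.cast_nonneg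

lemma sum_range_rpow_mul_min_le {c t : ℝ} (hc0 : 0 ≤ c) (hc1 : c < 1) (ht : 0 < t) {N : ℕ}
    (htN : t * N ≤ 1) :
    ∑ i ∈ Finset.range N, ((i + 1 : ℕ) : ℝ) ^ (-2 - c) * min (t ^ 2 * ((i + 1 : ℕ) : ℝ) ^ 2) 1
      ≤ t ^ (1 + c) / (1 - c) := calc
  _ ≤ ∑ i ∈ Finset.range N, t ^ 2 * ((i + 1 : ℕ) : ℝ) ^ (-c) := by
    refine Finset.sum_le_sum fun i _ ↦ ?_
    simpa [show -2 - c + 2 = -c by ring] using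
      rpow_mul_min_sq_le_sq_mul_rpow (-2 - c) t (i + 1 : ℕ).cast_nonneg
  _ ≤ t ^ 2 * ((N : ℝ) ^ (-c + 1) / (-c + 1)) := by
    rw [← Finset.mul_sum]
    gcongr
    exact sum_range_natCast_succ_rpow_le (by linarith) (by linarith) N
  _ = t ^ ((1 + c) + (1 - c)) * (N : ℝ) ^ (1 - c) / (1 - c) := by
    rw [show (1 + c) + (1 - c) = (2 : ℕ) by ring_nf, rpow_natCast, neg_add_eq_sub]; ring
  _ ≤ t ^ (1 + c) / (1 - c) := by
    gcongr
    exact rpow_add_mul_rpow_le _ ht N.cast_nonneg (by linarith) htN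

lemma tsum_rpow_mul_min_add_le {c t : ℝ} (hc : -1 < c) {N : ℕ} (htN : 1 ≤ 2 * t * N) :
    ∑' i : ℕ, ((i + N + 1 : ℕ) : ℝ) ^ (-2 - c) * min (t ^ 2 * ((i + N + 1 : ℕ) : ℝ) ^ 2) 1
      ≤ 2 ^ (1 + c) / (1 + c) * t ^ (1 + c) := by
  have hN : 0 < N := Nat.pos_of_ne_zero (by rintro rfl; norm_num at htN)
  have ht : 0 < t := by by_contra! ht; nlinarith [(N.cast_nonneg : (0 : ℝ) ≤ N)]
  calc _ ≤ ∑' i : ℕ, ((i + N + 1 : ℕ) : ℝ) ^ (-2 - c) :=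
        ((summable_nat_add_iff (N + 1)).2 (summable_rpow_mul_min hc t)).tsum_le_tsum
          (fun i ↦ rpow_mul_min_le_rpow _ _ (i + N + 1).cast_nonneg)
          ((summable_nat_add_iff (N + 1)).2 (summable_nat_rpow.2 (by linarith)))
    _ ≤ (N : ℝ) ^ (-(1 + c)) / (1 + c) := by
        convert tsum_natCast_add_succ_rpow_le (s := -2 - c) (by linarith) hN using 3 <;> ring
    _ ≤ 2 ^ (1 + c) / (1 + c) * t ^ (1 + c) := by
        rw [div_mul_eq_mul_div, ← mul_rpow zero_le_two ht.le]
        exact div_le_div_of_nonneg_right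
          (rpow_neg_le_of_one_le_mul (by positivity) (by linarith) htN) (by linarith)

theorem sum_min_le_t_pow (C : ℝ) (hC0 : 0 < C) (hC1 : C < 1) :
    ∃ K : ℝ, 0 < K ∧ ∀ t : ℝ, 0 < t → t < 1 →
      (∑' n : ℕ+, (n : ℝ) ^ (-2 - C) * min (t ^ 2 * (n : ℝ) ^ 2) 1) ≤ K * t ^ (1 + C) := by
  refine ⟨1 / (1 - C) + 2 ^ (1 + C) / (1 + C), by positivity, fun t ht0 ht1 ↦ ?_⟩
  rw [tsum_pnat_eq_tsum_succ (f := fun n : ℕ ↦ (n : ℝ) ^ (-2 - C) * min (t ^ 2 * (n : ℝ) ^ 2) 1),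
    ← ((summable_nat_add_iff 1).2 (summable_rpow_mul_min (by linarith) t)).sum_add_tsum_nat_add
      ⌊t⁻¹⌋₊]
  have head := sum_range_rpow_mul_min_le hC0.le hC1 ht0 (mul_floor_inv_le_one ht0.le)
  have tail := tsum_rpow_mul_min_add_le (c := C) (by linarith)
    (one_le_two_mul_mul_floor_inv ht0 ht1.le)
  calc _ ≤ t ^ (1 + C) / (1 - C) + 2 ^ (1 + C) / (1 + C) * t ^ (1 + C) := add_le_add head tail
    _ = _ := by ring
end

section
/- Let d ≥ 3, ω ≥ 4 even, j an integer with 1 ≤ j ≤ d−1, and define α_j = (d−j)(1 − 2/ω) / min{1, 2(d−j)/ω}. If ω < 2d, then max{α_1, …, α_{d−1}} < d − 1. -/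
/-! Dividing by `min 1 (2a/ω)` with `a = d - j` turns `α_j` into `max (a (1 - 2/ω)) ((ω - 2)/2)`.
The first term is below `a ≤ d - 1`, and the second is below `d - 1` exactly because `ω < 2d`. -/

lemma div_min_eq_max_div {a b c : ℝ} (ha : 0 ≤ a) (hb : 0 < b) (hc : 0 < c) :
    a / min b c = max (a / b) (a / c) := by
  rcases le_total b c with h | h
  · rw [min_eq_left h, max_eq_left (div_le_div_of_nonneg_left ha hb h)]
  · rw [min_eq_right h, max_eq_right (div_le_div_of_nonneg_left ha hc h)]

lemma superSphere_exponent_eq_max {a ω : ℝ} (ha : 0 < a) (hω : 2 < ω) :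
    a * (1 - 2 / ω) / min 1 (2 * a / ω) = max (a * (1 - 2 / ω)) ((ω - 2) / 2) := by
  have hω₀ : 0 < ω := by linarith
  have h2ω : 2 / ω < 1 := (div_lt_one hω₀).mpr hω
  rw [div_min_eq_max_div (mul_nonneg ha.le (by linarith)) one_pos (by positivity), div_one]
  congr 1
  field_simp

theorem alpha_lt_d_sub_one_general (d ω : ℕ) (hω : 4 ≤ ω)
    (hωd : ω < 2 * d) :
    ∀ j : ℕ, 1 ≤ j → j ≤ d - 1 →
      ((d : ℝ) - j) * (1 - 2 / ω) / min 1 (2 * ((d : ℝ) - j) / ω) < (d : ℝ) - 1 := by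
  intro j hj₁ hjd
  have hj : (1 : ℝ) ≤ j := by exact_mod_cast hj₁
  have hjd' : (j : ℝ) + 1 ≤ d := by exact_mod_cast (by omega : j + 1 ≤ d)
  have hω' : (2 : ℝ) < ω := by exact_mod_cast (by omega : 2 < ω)
  have hωd' : (ω : ℝ) < 2 * d := by exact_mod_cast hωd
  rw [superSphere_exponent_eq_max (by linarith) hω', max_lt_iff]
  constructor
  · have : ((d : ℝ) - j) * (1 - 2 / ω) < d - j :=
      mul_lt_of_lt_one_right (by linarith) (sub_lt_self 1 (by positivity))
    linarith
  · linarith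

theorem alpha_lt_d_sub_one (d ω : ℕ) (hd : 3 ≤ d) (hω : 4 ≤ ω) (hωeven : Even ω)
    (hωd : ω < 2 * d) :
    ∀ j : ℕ, 1 ≤ j → j ≤ d - 1 →
      ((d : ℝ) - j) * (1 - 2 / ω) / min 1 (2 * ((d : ℝ) - j) / ω) < (d : ℝ) - 1 :=
  alpha_lt_d_sub_one_general d ω hω hωd
end
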